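/- Fix a finite set I of students, a finite set S of schools, schools' preferences, quotas, and a k-degenerate student acquaintance graph G. Then there exists a mechanism (a function assigning a feasible matching to every profile of students' strict linear orders on S ∪ {∅}) that is strategyproof and whose output matching is Pareto efficient and locally EF-k for every profile of students' preferences. -/

import Mathlib

section Defs

variable {I S : Type*}

/-- Students' preference profiles: `pI i a b` means student `i` strictly prefers option `a`
to option `b`, where `none` represents being unmatched. -/
abbrev StudentPrefs (I S : Type*) := I → Option S → Option S → Prop

/-- Schools' preference profiles: `pS s a b` means school `s` strictly prefers `a` to `b`,
where `none` represents leaving a seat vacant. -/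
abbrev SchoolPrefs (I S : Type*) := S → Option I → Option I → Prop

/-- Each student's preference is a strict linear order on `S ∪ {∅}`. -/
def ValidStudentPrefs (pI : StudentPrefs I S) : Prop :=
  ∀ i, IsStrictTotalOrder (Option S) (pI i)

/-- Each school's preference is a strict linear order on `I ∪ {∅}`. -/
def ValidSchoolPrefs (pS : SchoolPrefs I S) : Prop :=
  ∀ s, IsStrictTotalOrder (Option I) (pS s)

/-- A matching `μ : I → Option S` is feasible if each school's quota is respected. -/
def Feasible (q : S → ℕ) (μ : I → Option S) : Prop :=
  ∀ s : S, {i | μ i = some s}.ncard ≤ q s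

/-- Student `i` has justified envy toward student `i'` in matching `μ`. -/
def JEnvy (pI : StudentPrefs I S) (pS : SchoolPrefs I S)
    (μ : I → Option S) (i i' : I) : Prop :=
  ∃ s : S, μ i' = some s ∧ pI i (some s) (μ i) ∧ pS s (some i) (some i')

/-- Local envy: justified envy toward a neighbor in the student acquaintance graph `G`. -/
def LocalEnvy (G : SimpleGraph I) (pI : StudentPrefs I S) (pS : SchoolPrefs I S)
    (μ : I → Option S) (i i' : I) : Prop :=
  JEnvy pI pS μ i i' ∧ G.Adj i i'

/-- Locally envy-free matching. -/
def LEF (G : SimpleGraph I) (pI : StudentPrefs I S) (pS : SchoolPrefs I S)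
    (μ : I → Option S) : Prop :=
  ∀ i i', ¬ LocalEnvy G pI pS μ i i'

/-- Fair (justified-envy-free) matching. -/
def Fair (pI : StudentPrefs I S) (pS : SchoolPrefs I S) (μ : I → Option S) : Prop :=
  ∀ i i', ¬ JEnvy pI pS μ i i'

/-- Locally envy-free up to `k` peers: every student has local envy toward at most `k` students. -/
def LocEF (G : SimpleGraph I) (pI : StudentPrefs I S) (pS : SchoolPrefs I S)
    (k : ℕ) (μ : I → Option S) : Prop :=
  ∀ i, {i' | LocalEnvy G pI pS μ i i'}.ncard ≤ k

/-- Locally envy-receiving-free up to `k` peers: for every student at most `k` students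
have local envy toward her. -/
def LocERF (G : SimpleGraph I) (pI : StudentPrefs I S) (pS : SchoolPrefs I S)
    (k : ℕ) (μ : I → Option S) : Prop :=
  ∀ i, {i' | LocalEnvy G pI pS μ i' i}.ncard ≤ k

/-- `μ'` Pareto dominates `μ`. -/
def Dominates (pI : StudentPrefs I S) (μ' μ : I → Option S) : Prop :=
  (∀ i, μ' i = μ i ∨ pI i (μ' i) (μ i)) ∧ (∃ i, pI i (μ' i) (μ i))

/-- A feasible matching is Pareto efficient if no feasible matching Pareto dominates it. -/
def ParetoEfficient (pI : StudentPrefs I S) (q : S → ℕ) (μ : I → Option S) : Prop :=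
  ∀ μ', Feasible q μ' → ¬ Dominates pI μ' μ

/-- `(i, s)` is a mutually-best pair. -/
def MBPair (pI : StudentPrefs I S) (pS : SchoolPrefs I S) (i : I) (s : S) : Prop :=
  (∀ x : Option S, x ≠ some s → pI i (some s) x) ∧
  (∀ y : Option I, y ≠ some i → pS s (some i) y)

/-- A matching is mutually-best if every mutually-best pair is matched. -/
def MutuallyBest (pI : StudentPrefs I S) (pS : SchoolPrefs I S) (μ : I → Option S) : Prop :=
  ∀ i s, MBPair pI pS i s → μ i = some s

/-- The set of the `m` most-preferred elements under a strict order `r`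
(`r j i` meaning `j` is strictly preferred to `i`). -/
def topSet (r : I → I → Prop) (m : ℕ) : Set I := {i | {j | r j i}.ncard < m}

/-- A strict linear order on `I` is single-peaked on the graph `G` if for each
`m ∈ {1, …, |I|}` the set of the `m` most-preferred elements induces a connected
subgraph of `G`. -/
def SinglePeakedOn (G : SimpleGraph I) (r : I → I → Prop) : Prop :=
  ∀ m : ℕ, 1 ≤ m → m ≤ Nat.card I → (G.induce (topSet r m)).Connected

/-- `(T, bag)` is a tree decomposition of `G`. -/
structure IsTreeDecomp {V : Type*} (G : SimpleGraph I) (T : SimpleGraph V)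
    (bag : V → Set I) : Prop where
  tree : T.IsTree
  covers : ∀ i : I, ∃ t, i ∈ bag t
  subtree : ∀ i : I, (T.induce {t | i ∈ bag t}).Connected
  edges : ∀ ⦃i i' : I⦄, G.Adj i i' → ∃ t, i ∈ bag t ∧ i' ∈ bag t

/-- `G` has treewidth at most `k`: it admits a tree decomposition of width at most `k`. -/
def TreewidthAtMost (G : SimpleGraph I) (k : ℕ) : Prop :=
  ∃ (V : Type) (T : SimpleGraph V) (bag : V → Set I),
    Finite V ∧ IsTreeDecomp G T bag ∧ ∀ t, (bag t).ncard ≤ k + 1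

/-- `G` is `k`-degenerate: there is a linear ordering of the vertices (an injection
into `ℕ`) such that every vertex has at most `k` neighbors occurring strictly later. -/
def Degenerate (G : SimpleGraph I) (k : ℕ) : Prop :=
  ∃ ord : I → ℕ, Function.Injective ord ∧
    ∀ i, {i' | G.Adj i i' ∧ ord i < ord i'}.ncard ≤ k

/-- The first index `j` in the list `L` of bags such that `i ∈ bag (L.get j)`. -/
noncomputable def firstBagIdx {V : Type*} (L : List V) (bag : V → Set I) (i : I) : ℕ :=
  sInf {j | ∃ h : j < L.length, i ∈ bag (L.get ⟨j, h⟩)}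

/-- A strict linear order on `I` is single-peaked on a tree decomposition `(T, bag)` if
there is a sequence of nodes covering all vertices, each node after the first adjacent in
`T` to an earlier one, such that vertices first covered earlier are preferred. -/
def SinglePeakedOnTD {V : Type*} (T : SimpleGraph V) (bag : V → Set I)
    (r : I → I → Prop) : Prop :=
  ∃ L : List V,
    (∀ i : I, ∃ j : ℕ, ∃ h : j < L.length, i ∈ bag (L.get ⟨j, h⟩)) ∧
    (∀ j : ℕ, ∀ h : j < L.length, 1 ≤ j →
      ∃ j' : ℕ, ∃ h' : j' < L.length, j' < j ∧ T.Adj (L.get ⟨j', h'⟩) (L.get ⟨j, h⟩)) ∧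
    (∀ i i' : I, firstBagIdx L bag i < firstBagIdx L bag i' → r i i')

/-- `(i, s)` is a blocking pair for the feasible matching `μ`. -/
def BlockingPair (pI : StudentPrefs I S) (pS : SchoolPrefs I S) (q : S → ℕ)
    (μ : I → Option S) (i : I) (s : S) : Prop :=
  μ i ≠ some s ∧ pI i (some s) (μ i) ∧
  (({i' | μ i' = some s}.ncard < q s ∧ pS s (some i) none) ∨
   ({i' | μ i' = some s}.ncard = q s ∧
     ∃ i₀, μ i₀ = some s ∧
       (∀ i₁, μ i₁ = some s → i₁ = i₀ ∨ pS s (some i₁) (some i₀)) ∧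
       pS s (some i) (some i₀)))

/-- A matching is locally stable if for every blocking pair `(i, s)`, no neighbor of `i`
is matched to `s`. -/
def LocallyStable (G : SimpleGraph I) (pI : StudentPrefs I S) (pS : SchoolPrefs I S)
    (q : S → ℕ) (μ : I → Option S) : Prop :=
  ∀ i s, BlockingPair pI pS q μ i s → ∀ i', G.Adj i i' → μ i' ≠ some s

/-- Strategyproofness of a mechanism `f` (the schools' side being fixed). -/
def Strategyproof (f : StudentPrefs I S → (I → Option S)) : Prop :=
  ∀ pI : StudentPrefs I S, ValidStudentPrefs pI → ∀ i : I,
    ∀ pI' : StudentPrefs I S, ValidStudentPrefs pI' →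
      (∀ i'' : I, i'' ≠ i → pI' i'' = pI i'') →
      f pI i = f pI' i ∨ pI i (f pI i) (f pI' i)

end Defs

/-!
Students pick, one at a time, their favourite option still open: serial dictatorship. Any
serial dictatorship is strategyproof (a student's report only selects her pick from a menu
that her report does not affect) and Pareto efficient (a weak improvement for everyone must
agree with the first student's pick, then with the second's, and so on). A student can
only envy students who picked before her, because a school she prefers to her own
assignment was already full when she picked. Letting the students pick in reverse
degeneracy order, every student is preceded by at most `k` of her neighbours, hence has
local envy toward at most `k` students.
-/

open Function

section Favorite

variable {α : Type*}

/-- `r a b` means that `a` is preferred to `b`. Junk unless `r` is a strict total order on a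
finite type and `A` is nonempty. -/
noncomputable def favorite [Nonempty α] (r : α → α → Prop) (A : Set α) : α :=
  Classical.epsilon fun a => a ∈ A ∧ ∀ b ∈ A, ¬ r b a

variable [Nonempty α] [Finite α] {r : α → α → Prop} {A : Set α}

theorem favorite_spec (hr : IsStrictTotalOrder α r) (hA : A.Nonempty) :
    favorite r A ∈ A ∧ ∀ b ∈ A, ¬ r b (favorite r A) :=
  haveI := hr
  Classical.epsilon_spec ((Finite.wellFounded_of_trans_of_irrefl r).has_min A hA)

theorem favorite_mem (hr : IsStrictTotalOrder α r) (hA : A.Nonempty) : favorite r A ∈ A :=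
  (favorite_spec hr hA).1

theorem not_rel_favorite (hr : IsStrictTotalOrder α r) {b : α} (hb : b ∈ A) :
    ¬ r b (favorite r A) :=
  (favorite_spec hr ⟨b, hb⟩).2 b hb

theorem favorite_eq_or_rel (hr : IsStrictTotalOrder α r) {b : α} (hb : b ∈ A) :
    favorite r A = b ∨ r (favorite r A) b := by
  have := hr
  rcases trichotomous_of r (favorite r A) b with h | h | h
  · exact Or.inr h
  · exact Or.inl h
  · exact absurd h (not_rel_favorite hr hb)

end Favorite

section Quotas

variable {I S : Type*} {q : S → ℕ} {s : S}

/-- Here `s ∈ o` means `o = some s`, so being unmatched is always open. -/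
def openOptions (q : S → ℕ) : Set (Option S) := {o | ∀ s ∈ o, 0 < q s}

theorem none_mem_openOptions (q : S → ℕ) : none ∈ openOptions q := by
  simp [openOptions]

theorem some_mem_openOptions : some s ∈ openOptions q ↔ 0 < q s := by
  simp [openOptions]

theorem favorite_mem_openOptions [Finite S] {r : Option S → Option S → Prop}
    (hr : IsStrictTotalOrder (Option S) r) (q : S → ℕ) :
    favorite r (openOptions q) ∈ openOptions q :=
  favorite_mem hr ⟨none, none_mem_openOptions q⟩

open Classical in
noncomputable def takeSeat (o : Option S) (q : S → ℕ) : S → ℕ :=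
  fun s => if o = some s then q s - 1 else q s

theorem takeSeat_le (o : Option S) (q : S → ℕ) (s : S) : takeSeat o q s ≤ q s := by
  unfold takeSeat
  split_ifs <;> omega

theorem takeSeat_some_self : takeSeat (some s) q s = q s - 1 := by
  simp [takeSeat]

theorem takeSeat_of_ne {o : Option S} (h : o ≠ some s) : takeSeat o q s = q s := by
  simp [takeSeat, h]

def FeasibleOn (q : S → ℕ) (L : List I) (μ : I → Option S) : Prop :=
  ∀ s, {j | j ∈ L ∧ μ j = some s}.ncard ≤ q s

variable [Finite I] {L : List I} {μ : I → Option S} {i : I}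

theorem Feasible.feasibleOn (h : Feasible q μ) (L : List I) : FeasibleOn q L μ :=
  fun s => (Set.ncard_le_ncard fun _ (hj : _ ∧ _) => hj.2).trans (h s)

theorem FeasibleOn.mem_openOptions (h : FeasibleOn q (i :: L) μ) : μ i ∈ openOptions q :=
  fun s hs =>
    have hi : i ∈ {j | j ∈ i :: L ∧ μ j = some s} := ⟨List.mem_cons_self, hs⟩
    ((Set.ncard_pos (Set.toFinite _)).2 ⟨i, hi⟩).trans_le (h s)

theorem FeasibleOn.tail (h : FeasibleOn q (i :: L) μ) (hi : i ∉ L) :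
    FeasibleOn (takeSeat (μ i) q) L μ := by
  intro s
  by_cases hs : μ i = some s
  · have hcons :
        {j | j ∈ i :: L ∧ μ j = some s} = insert i {j | j ∈ L ∧ μ j = some s} := by
      ext j
      rcases eq_or_ne j i with rfl | hji
      · simp [hs]
      · simp [hji]
    have hle := h s
    rw [hcons, Set.ncard_insert_of_notMem fun hj => hi hj.1] at hle
    rw [hs, takeSeat_some_self]
    omega
  · rw [takeSeat_of_ne hs]
    refine (Set.ncard_le_ncard (t := {j | j ∈ i :: L ∧ μ j = some s}) ?_).trans (h s)
    exact fun j hj => ⟨List.mem_cons_of_mem _ hj.1, hj.2⟩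

end Quotas

section SerialDictatorship

variable {I S : Type*}

open Classical in
/-- The head of `L` picks first; students not in `L` stay unmatched. -/
noncomputable def serialDictatorship (pI : StudentPrefs I S) :
    List I → (S → ℕ) → I → Option S
  | [], _ => fun _ => none
  | i :: L, q => fun j =>
    if j = i then favorite (pI i) (openOptions q)
    else serialDictatorship pI L (takeSeat (favorite (pI i) (openOptions q)) q) j

variable {pI : StudentPrefs I S} {L : List I} {q : S → ℕ} {i j : I} {s : S}

@[simp]
theorem serialDictatorship_nil : serialDictatorship pI [] q j = none := rfl

theorem serialDictatorship_cons_self :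
    serialDictatorship pI (i :: L) q i = favorite (pI i) (openOptions q) := by
  simp [serialDictatorship]

theorem serialDictatorship_cons_of_ne (h : j ≠ i) :
    serialDictatorship pI (i :: L) q j =
      serialDictatorship pI L (takeSeat (favorite (pI i) (openOptions q)) q) j := by
  simp [serialDictatorship, h]

variable [Finite S]

theorem strategyproof_serialDictatorship (L : List I) (q : S → ℕ) :
    Strategyproof fun pI => serialDictatorship pI L q := by
  induction L generalizing q with
  | nil => exact fun _ _ _ _ _ _ => Or.inl rfl
  | cons a L ih =>
    intro pI hv i pI' hv' hothers
    rcases eq_or_ne i a with rfl | hia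
    · simp only [serialDictatorship_cons_self]
      exact favorite_eq_or_rel (hv i) (favorite_mem_openOptions (hv' i) q)
    · simp only [serialDictatorship_cons_of_ne hia, hothers a hia.symm]
      exact ih _ pI hv i pI' hv' hothers

theorem pos_of_serialDictatorship_eq_some (hv : ValidStudentPrefs pI)
    (h : serialDictatorship pI L q j = some s) : 0 < q s := by
  induction L generalizing q with
  | nil => simp at h
  | cons i L ih =>
    rcases eq_or_ne j i with rfl | hji
    · rw [serialDictatorship_cons_self] at h
      exact some_mem_openOptions.1 (h ▸ favorite_mem_openOptions (hv j) q)
    · rw [serialDictatorship_cons_of_ne hji] at h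
      exact (ih h).trans_le (takeSeat_le _ _ _)

theorem rel_of_prefers_serialDictatorship (hv : ValidStudentPrefs pI) {R : I → I → Prop}
    (hL : L.Pairwise R) {i' : I} (hi : i ∈ L) (hs : serialDictatorship pI L q i' = some s)
    (hpref : pI i (some s) (serialDictatorship pI L q i)) : R i' i := by
  induction L generalizing q with
  | nil => simp at hi
  | cons a L ih =>
    obtain ⟨hhead, hL⟩ := List.pairwise_cons.mp hL
    rcases eq_or_ne i a with rfl | hia
    · exfalso
      rw [serialDictatorship_cons_self] at hpref
      have hfull : q s = 0 := by
        by_contra h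
        exact not_rel_favorite (hv i) (some_mem_openOptions.2 (Nat.pos_of_ne_zero h)) hpref
      rcases eq_or_ne i' i with rfl | hi'
      · rw [serialDictatorship_cons_self] at hs
        have := hv i'
        exact irrefl_of (pI i') _ (hs ▸ hpref)
      · rw [serialDictatorship_cons_of_ne hi'] at hs
        have := (pos_of_serialDictatorship_eq_some hv hs).trans_le (takeSeat_le _ _ _)
        omega
    · have hiL : i ∈ L := (List.mem_cons.mp hi).resolve_left hia
      rw [serialDictatorship_cons_of_ne hia] at hpref
      rcases eq_or_ne i' a with rfl | hi'a
      · exact hhead i hiL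
      · rw [serialDictatorship_cons_of_ne hi'a] at hs
        exact ih hL hiL hs hpref

variable [Finite I]

theorem feasible_serialDictatorship (hv : ValidStudentPrefs pI) :
    Feasible q (serialDictatorship pI L q) := by
  induction L generalizing q with
  | nil => simp [Feasible]
  | cons i L ih =>
    intro s
    set o := favorite (pI i) (openOptions q)
    have hsub : {j | serialDictatorship pI (i :: L) q j = some s} ⊆
        insert i {j | serialDictatorship pI L (takeSeat o q) j = some s} := by
      intro j hj
      rcases eq_or_ne j i with rfl | hji
      · exact Set.mem_insert _ _
      · rw [Set.mem_ofPred_eq, serialDictatorship_cons_of_ne hji] at hj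
        exact Set.mem_insert_of_mem _ hj
    by_cases ho : o = some s
    · have hpos : 0 < q s := some_mem_openOptions.1 (ho ▸ favorite_mem_openOptions (hv i) q)
      have htail := ih (q := takeSeat o q) s
      rw [ho, takeSeat_some_self] at htail
      calc _ ≤ _ := Set.ncard_le_ncard hsub
        _ ≤ _ := Set.ncard_insert_le _ _
        _ ≤ q s - 1 + 1 := by rw [ho]; omega
        _ = q s := by omega
    · have hi : i ∉ {j | serialDictatorship pI (i :: L) q j = some s} := by
        simpa [serialDictatorship_cons_self] using ho
      rw [← takeSeat_of_ne (q := q) ho]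
      exact (Set.ncard_le_ncard ((Set.subset_insert_iff_of_notMem hi).1 hsub)).trans (ih s)

theorem eq_serialDictatorship_of_weaklyPreferred (hv : ValidStudentPrefs pI) (hL : L.Nodup)
    {μ : I → Option S} (hμ : FeasibleOn q L μ)
    (hpref : ∀ j ∈ L, μ j = serialDictatorship pI L q j ∨
      pI j (μ j) (serialDictatorship pI L q j)) :
    ∀ j ∈ L, μ j = serialDictatorship pI L q j := by
  induction L generalizing q with
  | nil => simp
  | cons i L ih =>
    obtain ⟨hi, hL⟩ := List.nodup_cons.mp hL
    have hμi : μ i = favorite (pI i) (openOptions q) := by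
      rw [← serialDictatorship_cons_self (L := L)]
      refine (hpref i List.mem_cons_self).resolve_right fun h => ?_
      rw [serialDictatorship_cons_self] at h
      exact not_rel_favorite (hv i) hμ.mem_openOptions h
    have htail : ∀ j ∈ L, serialDictatorship pI (i :: L) q j =
        serialDictatorship pI L (takeSeat (μ i) q) j := fun j hj => by
      rw [serialDictatorship_cons_of_ne (ne_of_mem_of_not_mem hj hi), hμi]
    refine List.forall_mem_cons.2 ⟨by rw [serialDictatorship_cons_self, hμi], fun j hj => ?_⟩
    rw [htail j hj]
    refine ih hL (hμ.tail hi) (fun j' hj' => ?_) j hj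
    rw [← htail j' hj']
    exact hpref j' (List.mem_cons_of_mem _ hj')

theorem paretoEfficient_serialDictatorship (hv : ValidStudentPrefs pI) (hL : L.Nodup)
    (hcover : ∀ i, i ∈ L) :
    ParetoEfficient pI q (serialDictatorship pI L q) := by
  rintro μ hμ ⟨hweak, i, hstrict⟩
  have hi := eq_serialDictatorship_of_weaklyPreferred hv hL (hμ.feasibleOn L)
    (fun j _ => hweak j) i (hcover i)
  have := hv i
  exact irrefl_of (pI i) _ (hi ▸ hstrict)

theorem locEF_serialDictatorship (hv : ValidStudentPrefs pI) (G : SimpleGraph I)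
    (pS : SchoolPrefs I S) {k : ℕ} {R : I → I → Prop} (hL : L.Pairwise R)
    (hcover : ∀ i, i ∈ L) (hk : ∀ i, {i' | G.Adj i i' ∧ R i' i}.ncard ≤ k) :
    LocEF G pI pS k (serialDictatorship pI L q) := by
  intro i
  refine (Set.ncard_le_ncard ?_).trans (hk i)
  rintro i' ⟨⟨s, hs, hpref, -⟩, hadj⟩
  exact ⟨hadj, rel_of_prefers_serialDictatorship hv hL (hcover i) hs hpref⟩

end SerialDictatorship

theorem exists_list_pairwise_gt_of_injective {I β : Type*} [Fintype I] [LinearOrder β]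
    {ord : I → β} (hinj : Injective ord) :
    ∃ L : List I, (∀ i, i ∈ L) ∧ L.Pairwise fun a b => ord b < ord a := by
  let : LinearOrder I := LinearOrder.lift' ord hinj
  exact ⟨Finset.univ.sort (· ≥ ·), fun i => by simp, (Finset.sortedGT_sort _).pairwise⟩

theorem sp_pe_locef_mechanism_degenerate_general {I S : Type*} [Fintype I] [Fintype S]
    (k : ℕ) (G : SimpleGraph I) (hdeg : Degenerate G k)
    (pS : SchoolPrefs I S) (q : S → ℕ) :
    ∃ f : StudentPrefs I S → (I → Option S),
      (∀ pI, ValidStudentPrefs pI → Feasible q (f pI)) ∧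
      Strategyproof f ∧
      ∀ pI, ValidStudentPrefs pI →
        ParetoEfficient pI q (f pI) ∧ LocEF G pI pS k (f pI) := by
  obtain ⟨ord, hinj, hk⟩ := hdeg
  obtain ⟨L, hcover, hL⟩ := exists_list_pairwise_gt_of_injective hinj
  have hnodup : L.Nodup := hL.imp fun h e => (e ▸ h).false
  exact ⟨fun pI => serialDictatorship pI L q,
    fun _ hv => feasible_serialDictatorship hv,
    strategyproof_serialDictatorship L q,
    fun _ hv => ⟨paretoEfficient_serialDictatorship hv hnodup hcover,
      locEF_serialDictatorship hv G pS hL hcover hk⟩⟩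

/-- for any fixed schools' preferences, quotas, and `k`-degenerate
acquaintance graph, there exists a strategyproof mechanism whose output matching is always
feasible, Pareto efficient, and locally EF-k. -/
theorem sp_pe_locef_mechanism_degenerate {I S : Type*} [Fintype I] [Fintype S] [Nonempty I]
    (k : ℕ) (G : SimpleGraph I) (hdeg : Degenerate G k)
    (pS : SchoolPrefs I S) (q : S → ℕ) (hpS : ValidSchoolPrefs pS) :
    ∃ f : StudentPrefs I S → (I → Option S),
      (∀ pI, ValidStudentPrefs pI → Feasible q (f pI)) ∧
      Strategyproof f ∧
      ∀ pI, ValidStudentPrefs pI →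
        ParetoEfficient pI q (f pI) ∧ LocEF G pI pS k (f pI) :=
  sp_pe_locef_mechanism_degenerate_general k G hdeg pS q
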